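/- Let G be a finitely generated one-ended group with exponential growth, realized as a Cayley graph X with respect to a finite symmetric generating set. If there exists a constant C such that Div_X(n) ≤ C·n for infinitely many n ∈ ℕ, then X has exponentially many fat bigons. -/

import Mathlib

open SimpleGraph

/-- A graph has uniformly bounded degree if there is a uniform finite bound on
the cardinality of all neighbour sets. -/
def BddDegree {V : Type*} (G : SimpleGraph V) : Prop :=
  ∃ D : ℕ, ∀ v : V, (G.neighborSet v).encard ≤ D

/-- A walk is geodesic if its length realizes the graph distance between its endpoints. -/
def SimpleGraph.Walk.IsGeodesic {V : Type*} {G : SimpleGraph V} {x y : V}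
    (w : G.Walk x y) : Prop :=
  w.length = G.dist x y

/-- A graph is `δ`-hyperbolic if each side of every geodesic triangle is contained in the
closed `δ`-neighbourhood of the union of the other two sides. -/
def GraphHyperbolic {V : Type*} (G : SimpleGraph V) (δ : ℝ) : Prop :=
  ∀ ⦃a b c : V⦄ (γ₁ : G.Walk a b) (γ₂ : G.Walk b c) (γ₃ : G.Walk c a),
    γ₁.IsGeodesic → γ₂.IsGeodesic → γ₃.IsGeodesic →
      ∀ u ∈ γ₁.support, ∃ v, (v ∈ γ₂.support ∨ v ∈ γ₃.support) ∧ (G.dist u v : ℝ) ≤ δ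

/-- `x` admits an `(L,s,C)`-bigon with respect to the basepoint `x₀`: two paths from `x₀`
to `x`, each of length at most `L·d(x₀,x)`, such that any vertex of the first path outside
the `C`-neighbourhood of `{x₀, x}` is at distance more than `s` from any vertex of the
second path outside that neighbourhood. -/
def IsBigonAt {V : Type*} (G : SimpleGraph V) (x₀ : V) (L s C : ℝ) (x : V) : Prop :=
  ∃ α₁ α₂ : G.Walk x₀ x,
    ((α₁.length : ℝ) ≤ L * G.dist x₀ x) ∧ ((α₂.length : ℝ) ≤ L * G.dist x₀ x) ∧
    ∀ u ∈ α₁.support, ∀ v ∈ α₂.support,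
      (C < (G.dist x₀ u : ℝ) ∧ C < (G.dist x u : ℝ)) →
      (C < (G.dist x₀ v : ℝ) ∧ C < (G.dist x v : ℝ)) →
      s < (G.dist u v : ℝ)

/-- The set `B^X(L,s,C)` of vertices admitting an `(L,s,C)`-bigon. -/
def bigonSet {V : Type*} (G : SimpleGraph V) (x₀ : V) (L s C : ℝ) : Set V :=
  {x | IsBigonAt G x₀ L s C x}

/-- The closed ball of radius `n` about `x` in the graph metric. -/
def gBall {V : Type*} (G : SimpleGraph V) (x : V) (n : ℕ) : Set V :=
  {v | G.dist x v ≤ n}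

/-- `X` has exponentially many fat bigons at `x₀`. -/
def HasExpManyFatBigons {V : Type*} (G : SimpleGraph V) (x₀ : V) : Prop :=
  ∃ s₀ c L : ℝ, 0 ≤ s₀ ∧ 1 < c ∧ 1 < L ∧
    ∀ s : ℝ, s₀ ≤ s → ∃ C : ℝ, 0 ≤ C ∧
      {n : ℕ | (c ^ n : ℝ) ≤ ((bigonSet G x₀ L s C ∩ gBall G x₀ n).ncard : ℝ)}.Infinite

/-- `X` has no fat bigons at `x₀`. -/
def HasNoFatBigons {V : Type*} (G : SimpleGraph V) (x₀ : V) : Prop :=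
  ∀ L : ℝ, 1 ≤ L → ∃ s : ℝ, 0 ≤ s ∧ ∀ C : ℝ, 0 ≤ C →
    ∃ R : ℕ, ∀ x ∈ bigonSet G x₀ L s C, G.dist x₀ x ≤ R

/-- A coarse embedding of the graph `G` into the graph `H`, with multiplicative constant `K`
and compression function `ρ`. -/
def IsCoarseEmbedding {V W : Type*} (G : SimpleGraph V) (H : SimpleGraph W)
    (f : V → W) (K : ℝ) (ρ : ℕ → ℕ) : Prop :=
  1 ≤ K ∧ Filter.Tendsto ρ Filter.atTop Filter.atTop ∧
    ∀ x y : V, (ρ (G.dist x y) : ℝ) ≤ (H.dist (f x) (f y) : ℝ) ∧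
      (H.dist (f x) (f y) : ℝ) ≤ K * (G.dist x y : ℝ)

/-- The Cayley graph of a group with respect to a (symmetric) set `S`. -/
def cayleyGraph (G : Type*) [Group G] (S : Set G) : SimpleGraph G :=
  SimpleGraph.fromRel (fun x y => x⁻¹ * y ∈ S)

/-- The Cayley graph of `G` w.r.t. the basepoint `1` has exponential growth:
`|B_n(1)|^(1/n)` converges to a limit `> 1`. -/
def HasExpGrowth {V : Type*} (G : SimpleGraph V) (x₀ : V) : Prop :=
  ∃ a : ℝ, 1 < a ∧
    Filter.Tendsto (fun n : ℕ => ((gBall G x₀ n).ncard : ℝ) ^ ((n : ℝ)⁻¹))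
      Filter.atTop (nhds a)

/-- `Div_X(n) ≤ M`: for all vertices `a b` with `d(a,b) ≤ n` and every `c ∉ {a, b}`, there is
a path from `a` to `b` of length at most `M` avoiding the ball around `c` of radius
`(1/2)·d(c,{a,b}) − 2`. -/
def DivLE {V : Type*} (G : SimpleGraph V) (n : ℕ) (M : ℝ) : Prop :=
  ∀ a b c : V, G.dist a b ≤ n → c ≠ a → c ≠ b →
    ∃ w : G.Walk a b, (w.length : ℝ) ≤ M ∧
      ∀ u ∈ w.support, ((min (G.dist c a) (G.dist c b) : ℝ)) / 2 - 2 < (G.dist c u : ℝ)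

/-- A group (given as a graph) is one-ended. -/
def OneEnded {V : Type*} (G : SimpleGraph V) : Prop :=
  ∃! e, e ∈ G.end

/-!
Fix a scale `n` with `Div(n) ≤ C n` and a point `z` with `n/2 < |z| ≤ n`. On a geodesic from `1`
to `z` take `u, c, v` at distances `t - k, t, t + k` from `1`, where `t ≈ |z|/2` and `k ≈ n/32`.
A path from `1` to `z` of length at most `C n` avoiding the ball of radius `≈ t/2` about `c`,
extended by geodesics `u → 1` and `z → v`, stays far from the geodesic segment `u → v`: the two
form a fat bigon at `v` seen from `u`, with `L = 32 (max C 0 + 1)`. Translating by `u⁻¹` writes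
`z = u · b · (v⁻¹ z)` with `b` a bigon vertex of `B_{n/16}` and `u`, `v⁻¹ z` in a ball of radius
`≈ 15n/32`. Hence `|B_n| ≤ |B_{n/2}| + |B_{15n/32}|² · #bigons`, and since `|B_m| ≈ a^m` with
`a > 1`, the bigons in `B_{n/16}` are exponentially many.
-/

section

open Filter Set
open scoped Pointwise

lemma Set.ncard_mul_le {M : Type*} [Mul M] [IsCancelMul M] (s t : Set M) :
    (s * t).ncard ≤ s.ncard * t.ncard := by
  simpa only [Nat.card_coe_set_eq] using Set.natCard_mul_le

lemma eventually_pow_le_and_le_pow {u : ℕ → ℝ} {a b b' : ℝ} (hu : ∀ n, 0 ≤ u n)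
    (h : Tendsto (fun n : ℕ => u n ^ (n : ℝ)⁻¹) atTop (nhds a)) (hb : 0 ≤ b) (hba : b < a)
    (hab' : a < b') : ∀ᶠ n in atTop, b ^ n ≤ u n ∧ u n ≤ b' ^ n := by
  filter_upwards [h.eventually_mem (Ioo_mem_nhds hba hab'), eventually_ne_atTop 0] with n hn hn0
  rw [← Real.rpow_inv_natCast_pow (hu n) hn0]
  exact ⟨pow_le_pow_left₀ hb hn.1.le n, pow_le_pow_left₀ (hb.trans hn.1.le) hn.2.le n⟩

lemma pow_le_of_pow_add_le {θ x : ℝ} {a b r m n : ℕ} (hθ : 1 ≤ θ) (h2 : 2 ≤ θ ^ n)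
    (ha : a ≤ m) (hbr : b + r ≤ m) (h : θ ^ (m + n) ≤ θ ^ a + θ ^ b * x) : θ ^ r ≤ x := by
  by_contra! hx
  have hbx : θ ^ b * x < θ ^ m :=
    calc θ ^ b * x < θ ^ b * θ ^ r := mul_lt_mul_of_pos_left hx (by positivity)
      _ = θ ^ (b + r) := (pow_add θ b r).symm
      _ ≤ θ ^ m := pow_le_pow_right₀ hθ hbr
  have hθa : θ ^ a ≤ θ ^ m := pow_le_pow_right₀ hθ ha
  have hθm : 0 < θ ^ m := by positivity
  rw [pow_add] at h
  nlinarith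

lemma gBall_mono {V : Type*} {G : SimpleGraph V} (x : V) {m m' : ℕ} (h : m ≤ m') :
    gBall G x m ⊆ gBall G x m' :=
  fun _ hv => le_trans hv h

namespace SimpleGraph

variable {V V' : Type*} {G : SimpleGraph V} {G' : SimpleGraph V'}

lemma Hom.edist_le (f : G →g G') (u v : V) : G'.edist (f u) (f v) ≤ G.edist u v := by
  by_cases h : G.Reachable u v
  · obtain ⟨p, hp⟩ := h.exists_walk_length_eq_edist
    rw [← hp, ← Walk.length_map f]
    exact SimpleGraph.edist_le _
  · simp [edist_eq_top_of_not_reachable h]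

lemma Iso.dist_eq (φ : G ≃g G') (u v : V) : G'.dist (φ u) (φ v) = G.dist u v := by
  have h : G'.edist (φ u) (φ v) = G.edist u v :=
    le_antisymm (Hom.edist_le φ.toHom u v) (by simpa using Hom.edist_le φ.symm.toHom (φ u) (φ v))
  rw [dist, dist, h]

lemma IsBigonAt.map (φ : G ≃g G') {x₀ x : V} {L s C : ℝ} (h : IsBigonAt G x₀ L s C x) :
    IsBigonAt G' (φ x₀) L s C (φ x) := by
  obtain ⟨α₁, α₂, h₁, h₂, hsep⟩ := h
  refine ⟨α₁.map φ.toHom, α₂.map φ.toHom, ?_, ?_, ?_⟩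
  · simpa [Iso.dist_eq] using h₁
  · simpa [Iso.dist_eq] using h₂
  · simp only [Walk.support_map, List.mem_map]
    rintro _ ⟨p, hp, rfl⟩ _ ⟨q, hq, rfl⟩
    simpa [Iso.dist_eq] using hsep p hp q hq

namespace Walk

variable {x y : V}

lemma dist_getVert_getVert_le (p : G.Walk x y) {i j : ℕ} (hij : i ≤ j) :
    G.dist (p.getVert i) (p.getVert j) ≤ j - i := by
  have h := dist_le ((p.drop i).take (j - i))
  rw [take_length, drop_getVert, Nat.add_sub_cancel' hij] at h
  omega

namespace IsGeodesic

variable {p : G.Walk x y}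

lemma dist_getVert_getVert (hp : p.IsGeodesic) {i j : ℕ} (hij : i ≤ j) (hj : j ≤ p.length) :
    G.dist (p.getVert i) (p.getVert j) = j - i := by
  have hxi := p.dist_getVert_getVert_le (Nat.zero_le i)
  have hjy := p.dist_getVert_getVert_le hj
  have hij' := p.dist_getVert_getVert_le hij
  rw [getVert_zero] at hxi
  rw [getVert_length] at hjy
  have hxy : G.dist x y ≤ G.dist x (p.getVert i) + G.dist (p.getVert i) (p.getVert j)
      + G.dist (p.getVert j) y :=
    ((p.take j).reachable.dist_triangle_left y).trans
      (Nat.add_le_add_right ((p.take i).reachable.dist_triangle_left _) _)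
  have : p.length = G.dist x y := hp
  omega

lemma dist_start_getVert (hp : p.IsGeodesic) {j : ℕ} (hj : j ≤ p.length) :
    G.dist x (p.getVert j) = j := by
  simpa using hp.dist_getVert_getVert (Nat.zero_le j) hj

lemma dist_getVert_end (hp : p.IsGeodesic) {i : ℕ} (hi : i ≤ p.length) :
    G.dist (p.getVert i) y = p.length - i := by
  simpa using hp.dist_getVert_getVert hi le_rfl

lemma dist_add_dist_of_mem_support (hp : p.IsGeodesic) {w : V} (hw : w ∈ p.support) :
    G.dist x w + G.dist w y = G.dist x y := by
  obtain ⟨i, rfl, hi⟩ := mem_support_iff_exists_getVert.1 hw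
  have : p.length = G.dist x y := hp
  rw [hp.dist_start_getVert hi, hp.dist_getVert_end hi]
  omega

end IsGeodesic

end Walk

lemma Connected.dist_le_dist_of_dist_add_dist_eq (hconn : G.Connected) {a u v p q : V}
    (huv : G.dist a u + G.dist u v = G.dist a v) (hp : G.dist u p + G.dist p v = G.dist u v)
    (hq : G.dist u q + G.dist q a = G.dist u a) : G.dist u p ≤ G.dist q p := by
  have h₁ : G.dist a v ≤ G.dist a q + G.dist q v := hconn.dist_triangle
  have h₂ : G.dist q v ≤ G.dist q p + G.dist p v := hconn.dist_triangle
  rw [dist_comm (u := a) (v := q)] at h₁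
  rw [dist_comm (u := a) (v := u)] at huv
  omega

/-- The bigon is a geodesic `u → v` against the detour `u → a`, `W`, `b → v`. -/
theorem Connected.isBigonAt_of_detour (hconn : G.Connected) {a b c u v : V} {L s R : ℝ}
    (hu : G.dist a u + G.dist u v = G.dist a v) (hv : G.dist u v + G.dist v b = G.dist u b)
    (W : G.Walk a b) (hW : ∀ q ∈ W.support, R < G.dist c q)
    (hR : (G.dist c u + G.dist u v : ℝ) + s ≤ R)
    (hL : (G.dist u a + W.length + G.dist b v : ℝ) ≤ L * G.dist u v) :
    IsBigonAt G u L s s v := by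
  obtain ⟨σ, hσ⟩ := hconn.exists_walk_length_eq_dist u v
  obtain ⟨τ₁, hτ₁⟩ := hconn.exists_walk_length_eq_dist u a
  obtain ⟨τ₂, hτ₂⟩ := hconn.exists_walk_length_eq_dist b v
  refine ⟨σ, τ₁.append (W.append τ₂), ?_, ?_, ?_⟩
  · have hab : G.dist a b ≤ W.length := dist_le W
    have huv : G.dist u v ≤ G.dist u a + G.dist a v := hconn.dist_triangle
    have hav : G.dist a v ≤ G.dist a b + G.dist b v := hconn.dist_triangle
    have : (G.dist u v : ℝ) ≤ G.dist u a + W.length + G.dist b v := by exact_mod_cast (by omega)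
    rw [hσ]
    linarith
  · simpa only [Walk.length_append, hτ₁, hτ₂, Nat.cast_add, add_assoc] using hL
  · rintro p hpσ q hq ⟨hup, hvp⟩ -
    have hp : G.dist u p + G.dist p v = G.dist u v :=
      Walk.IsGeodesic.dist_add_dist_of_mem_support hσ hpσ
    simp only [Walk.mem_support_append_iff] at hq
    rcases hq with hq | hq | hq
    · have := hconn.dist_le_dist_of_dist_add_dist_eq hu hp
        (Walk.IsGeodesic.dist_add_dist_of_mem_support hτ₁ hq)
      simp only [dist_comm] at this hup ⊢
      exact hup.trans_le (by exact_mod_cast this)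
    · have hcp : G.dist c p ≤ G.dist c u + G.dist u p := hconn.dist_triangle
      have hcq : G.dist c q ≤ G.dist c p + G.dist p q := hconn.dist_triangle
      have hcq' : (G.dist c q : ℝ) ≤ G.dist c u + G.dist u v + G.dist p q := by
        exact_mod_cast (by omega)
      linarith [hW q hq]
    · have hq' := Walk.IsGeodesic.dist_add_dist_of_mem_support hτ₂ hq
      have := hconn.dist_le_dist_of_dist_add_dist_eq (a := b) (u := v) (v := u) (p := p) (q := q)
        (by simp only [dist_comm] at hv ⊢; omega) (by simp only [dist_comm] at hp ⊢; omega)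
        (by simp only [dist_comm] at hq' ⊢; omega)
      simp only [dist_comm] at this hvp ⊢
      exact hvp.trans_le (by exact_mod_cast this)

theorem Connected.exists_isBigonAt_of_divLE (hconn : G.Connected) {n : ℕ} {C s : ℝ}
    (hdiv : DivLE G n (C * n)) (hs : 0 ≤ s) (hn : 32 * s + 68 ≤ n) {a z : V}
    (hz₁ : n / 2 < G.dist a z) (hz₂ : G.dist a z ≤ n) :
    ∃ u v, G.dist a u ≤ n / 2 + 1 - n / 32 ∧ G.dist v z ≤ n / 2 + 1 - n / 32 ∧
      G.dist u v = 2 * (n / 32) ∧ IsBigonAt G u (32 * (max C 0 + 1)) s s v := by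
  have hn68 : 68 ≤ n := by exact_mod_cast (by linarith : (68 : ℝ) ≤ n)
  obtain ⟨γ, hγ⟩ : ∃ γ : G.Walk a z, γ.IsGeodesic := hconn.exists_walk_length_eq_dist a z
  set D := G.dist a z
  set t := D / 2
  set k := n / 32
  set u := γ.getVert (t - k)
  set c := γ.getVert t
  set v := γ.getVert (t + k)
  have hD : γ.length = D := hγ
  have hau : G.dist a u = t - k := hγ.dist_start_getVert (by omega)
  have hav : G.dist a v = t + k := hγ.dist_start_getVert (by omega)
  have hac : G.dist a c = t := hγ.dist_start_getVert (by omega)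
  have huz : G.dist u z = D - (t - k) := hD ▸ hγ.dist_getVert_end (by omega)
  have hvz : G.dist v z = D - (t + k) := hD ▸ hγ.dist_getVert_end (by omega)
  have hcz : G.dist c z = D - t := hD ▸ hγ.dist_getVert_end (by omega)
  have huv : G.dist u v = 2 * k := by rw [hγ.dist_getVert_getVert (by omega) (by omega)]; omega
  have hcu : G.dist c u = k := by
    rw [dist_comm, hγ.dist_getVert_getVert (by omega) (by omega)]; omega
  obtain ⟨W, hWlen, hW⟩ := hdiv a z c hz₂
    (fun h => by rw [h, dist_self] at hac; omega) (fun h => by rw [h, dist_self] at hcz; omega)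
  have hmin : (min (G.dist c a : ℝ) (G.dist c z)) = t := by
    rw [dist_comm, hac, hcz, min_eq_left (by exact_mod_cast (by omega : t ≤ D - t))]
  rw [hmin] at hW
  refine ⟨u, v, by omega, by omega, huv, ?_⟩
  refine hconn.isBigonAt_of_detour (c := c) (R := t / 2 - 2) (by omega) (by omega) W hW ?_ ?_
  · have hkn : (32 * k : ℝ) ≤ n := by exact_mod_cast (by omega : 32 * k ≤ n)
    have htn : (n : ℝ) ≤ 4 * t + 1 := by exact_mod_cast (by omega : n ≤ 4 * t + 1)
    rw [hcu, huv]
    push_cast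
    linarith
  · have hlen : (G.dist u a + G.dist z v : ℝ) ≤ n := by
      rw [dist_comm, dist_comm (u := z)]
      exact_mod_cast (by omega)
    have hkn : (n : ℝ) ≤ 64 * k := by exact_mod_cast (by omega : n ≤ 64 * k)
    have hC : C * n ≤ max C 0 * n := by gcongr; exact le_max_left C 0
    rw [huv]
    push_cast
    nlinarith [le_max_right C 0]

end SimpleGraph

namespace HasExpGrowth

variable {V : Type*} {G : SimpleGraph V} {x₀ : V}

lemma exists_pow_bounds (h : HasExpGrowth G x₀) :
    ∃ θ : ℝ, 1 < θ ∧ ∀ᶠ m in atTop,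
      θ ^ (127 * m) ≤ (gBall G x₀ m).ncard ∧ ((gBall G x₀ m).ncard : ℝ) ≤ θ ^ (129 * m) := by
  obtain ⟨a, ha, hlim⟩ := h
  set θ := a ^ ((128 : ℕ) : ℝ)⁻¹
  have hθa : θ ^ 128 = a := Real.rpow_inv_natCast_pow (by linarith) (by norm_num)
  have hθ : 1 < θ := Real.one_lt_rpow ha (by norm_num)
  refine ⟨θ, hθ, ?_⟩
  simp only [pow_mul]
  refine eventually_pow_le_and_le_pow (fun _ => Nat.cast_nonneg _) hlim (by positivity) ?_ ?_
  all_goals rw [← hθa]; exact pow_lt_pow_right₀ hθ (by norm_num)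

lemma finite_gBall (h : HasExpGrowth G x₀) (m : ℕ) : (gBall G x₀ m).Finite := by
  obtain ⟨θ, hθ, hball⟩ := h.exists_pow_bounds
  obtain ⟨m', hm', hmm'⟩ := (hball.and (eventually_ge_atTop m)).exists
  refine (Set.finite_of_ncard_pos ?_).subset (gBall_mono x₀ hmm')
  exact_mod_cast (pow_pos (by linarith) _).trans_le hm'.1

end HasExpGrowth

namespace cayleyGraph

variable {A : Type*} [Group A] {S : Set A}

def mulLeft (S : Set A) (g : A) : cayleyGraph A S ≃g cayleyGraph A S where
  toEquiv := Equiv.mulLeft g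
  map_rel_iff' {x y} := by simp [cayleyGraph, mul_assoc]

@[simp] lemma mulLeft_apply (g x : A) : mulLeft S g x = g * x := rfl

lemma dist_one_inv_mul (x y : A) :
    (cayleyGraph A S).dist 1 (x⁻¹ * y) = (cayleyGraph A S).dist x y := by
  simpa using (mulLeft S x⁻¹).dist_eq x y

lemma connected (hS : Subgroup.closure S = ⊤) : (cayleyGraph A S).Connected := by
  refine (connected_iff_exists_forall_reachable _).2 ⟨1, fun g => ?_⟩
  induction (hS ▸ Subgroup.mem_top g : g ∈ Subgroup.closure S) using Subgroup.closure_induction with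
  | mem x hx =>
    rcases eq_or_ne x 1 with rfl | hx1
    · rfl
    · exact Adj.reachable ((fromRel_adj _ 1 x).2 ⟨Ne.symm hx1, Or.inl (by simpa using hx)⟩)
  | one => exact Reachable.refl 1
  | mul x y _ _ hx hy => exact hx.trans (by simpa using hy.map (mulLeft S x).toHom)
  | inv x _ hx => simpa using (hx.map (mulLeft S x⁻¹).toHom).symm

theorem gBall_subset_union_mul (hconn : (cayleyGraph A S).Connected) {n : ℕ} {C s : ℝ}
    (hdiv : DivLE (cayleyGraph A S) n (C * n)) (hs : 0 ≤ s) (hn : 32 * s + 68 ≤ n) :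
    gBall (cayleyGraph A S) 1 n ⊆ gBall (cayleyGraph A S) 1 (n / 2) ∪
      gBall (cayleyGraph A S) 1 (n / 2 + 1 - n / 32) *
        (bigonSet (cayleyGraph A S) 1 (32 * (max C 0 + 1)) s s ∩
          gBall (cayleyGraph A S) 1 (2 * (n / 32))) *
        gBall (cayleyGraph A S) 1 (n / 2 + 1 - n / 32) := by
  intro z hz
  by_cases hzn : (cayleyGraph A S).dist 1 z ≤ n / 2
  · exact Or.inl hzn
  obtain ⟨u, v, hu, hv, huv, hbigon⟩ :=
    hconn.exists_isBigonAt_of_divLE hdiv hs hn (not_le.1 hzn) hz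
  refine Or.inr ⟨u * (u⁻¹ * v), Set.mul_mem_mul hu ⟨?_, ?_⟩, v⁻¹ * z, ?_, by group⟩
  · simpa [bigonSet] using hbigon.map (mulLeft S u⁻¹)
  · exact (dist_one_inv_mul u v).trans_le huv.le
  · exact (dist_one_inv_mul v z).trans_le hv

theorem eventually_pow_le_ncard_bigonSet (hconn : (cayleyGraph A S).Connected) {θ : ℝ}
    (hθ : 1 < θ) (hfin : ∀ m, (gBall (cayleyGraph A S) 1 m).Finite)
    (hball : ∀ᶠ m in atTop, θ ^ (127 * m) ≤ (gBall (cayleyGraph A S) 1 m).ncard ∧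
      ((gBall (cayleyGraph A S) 1 m).ncard : ℝ) ≤ θ ^ (129 * m))
    (C : ℝ) {s : ℝ} (hs : 0 ≤ s) :
    ∀ᶠ n in atTop, DivLE (cayleyGraph A S) n (C * n) →
      θ ^ (2 * (n / 32)) ≤ ((bigonSet (cayleyGraph A S) 1 (32 * (max C 0 + 1)) s s ∩
        gBall (cayleyGraph A S) 1 (2 * (n / 32))).ncard : ℝ) := by
  obtain ⟨N, hN⟩ := eventually_atTop.1 hball
  obtain ⟨N₂, hN₂⟩ := pow_unbounded_of_one_lt 2 hθ
  obtain ⟨N₃, hN₃⟩ := exists_nat_ge (32 * s + 68)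
  filter_upwards [eventually_ge_atTop (3 * N + N₂ + N₃ + 102)] with n hn hdiv
  set B := gBall (cayleyGraph A S) 1
  set M := n / 2 + 1 - n / 32
  set T := bigonSet (cayleyGraph A S) 1 (32 * (max C 0 + 1)) s s ∩ B (2 * (n / 32))
  have hcover := gBall_subset_union_mul hconn hdiv hs (hN₃.trans (by exact_mod_cast (by omega)))
  have hfinT : T.Finite := (hfin _).subset inter_subset_right
  have hcount : (B n).ncard ≤ (B (n / 2)).ncard + (B M).ncard * T.ncard * (B M).ncard :=
    calc (B n).ncard ≤ (B (n / 2) ∪ B M * T * B M).ncard :=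
          Set.ncard_le_ncard hcover ((hfin _).union (((hfin M).mul hfinT).mul (hfin M)))
      _ ≤ (B (n / 2)).ncard + (B M * T * B M).ncard := Set.ncard_union_le _ _
      _ ≤ (B (n / 2)).ncard + (B M).ncard * T.ncard * (B M).ncard := by
          gcongr
          exact (Set.ncard_mul_le _ _).trans (Nat.mul_le_mul_right _ (Set.ncard_mul_le _ _))
  refine pow_le_of_pow_add_le (m := 126 * n) (n := n) (a := 129 * (n / 2)) (b := 258 * M) hθ.le
    (hN₂.le.trans (pow_le_pow_right₀ hθ.le (by omega))) (by omega) (by omega) ?_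
  calc θ ^ (126 * n + n) = θ ^ (127 * n) := by ring_nf
    _ ≤ (B n).ncard := (hN n (by omega)).1
    _ ≤ (B (n / 2)).ncard + (B M).ncard * T.ncard * (B M).ncard := by exact_mod_cast hcount
    _ ≤ θ ^ (129 * (n / 2)) + θ ^ (129 * M) * T.ncard * θ ^ (129 * M) := by
        gcongr
        exacts [(hN _ (by omega)).2, (hN _ (by omega)).2, (hN _ (by omega)).2]
    _ = θ ^ (129 * (n / 2)) + θ ^ (258 * M) * T.ncard := by ring

end cayleyGraph

end

theorem expGrowth_linDivOnSubsequence_hasExpManyFatBigons_general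
    {G : Type*} [Group G] (S : Set G)
    (hSgen : Subgroup.closure S = ⊤)
    (hgrowth : HasExpGrowth (cayleyGraph G S) 1)
    (C : ℝ) (hdiv : {n : ℕ | DivLE (cayleyGraph G S) n (C * n)}.Infinite) :
    HasExpManyFatBigons (cayleyGraph G S) 1 := by
  obtain ⟨θ, hθ, hball⟩ := hgrowth.exists_pow_bounds
  refine ⟨0, θ, 32 * (max C 0 + 1), le_rfl, hθ, by linarith [le_max_right C 0],
    fun s hs => ⟨s, hs, Set.infinite_of_forall_exists_gt fun r => ?_⟩⟩
  have hbigons := cayleyGraph.eventually_pow_le_ncard_bigonSet (cayleyGraph.connected hSgen) hθ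
    hgrowth.finite_gBall hball C hs
  obtain ⟨n, hn, hbig⟩ := (Nat.frequently_atTop_iff_infinite.2 hdiv).and_eventually
    (hbigons.and (Filter.eventually_gt_atTop (32 * r + 32))) |>.exists
  exact ⟨2 * (n / 32), hbig.1 hn, by omega⟩

/-- (Proposition 3.6.) If a finitely generated one-ended group has
exponential growth and `Div_X(n) ≤ C·n` for infinitely many `n`, then its Cayley graph has
exponentially many fat bigons. -/
theorem expGrowth_linDivOnSubsequence_hasExpManyFatBigons
    {G : Type*} [Group G] (S : Set G)
    (hSfin : S.Finite) (hSsymm : S⁻¹ = S) (hSgen : Subgroup.closure S = ⊤)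
    (hends : OneEnded (cayleyGraph G S))
    (hgrowth : HasExpGrowth (cayleyGraph G S) 1)
    (C : ℝ) (hdiv : {n : ℕ | DivLE (cayleyGraph G S) n (C * n)}.Infinite) :
    HasExpManyFatBigons (cayleyGraph G S) 1 :=
  expGrowth_linDivOnSubsequence_hasExpManyFatBigons_general S hSgen hgrowth C hdiv
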